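/- arXiv:1112.2312 — 2 statements merged into one kernel-verified Lean document; each statement's English description precedes it below -/
import Mathlib

section
/- Let M be a Morse matching on a graded poset P. If r and s are equivalent rays in H_M(P), then r and s have the same degree, i.e. min{i : deg(r_j) = i for some j} = min{i : deg(s_j) = i for some j}. -/
/-!
In `H_M(P)` an unmatched arrow goes down one degree and a matched (reversed) arrow goes up one
degree. Since `M` is a matching, two upward arrows never follow each other, so from any point of
a ray the degree returns to at most its current value within two steps. Hence the minimal degree
of a ray is attained arbitrarily far out, i.e. it is already the minimal degree of every tail,
and equivalent rays share a tail.
-/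

/-- A directed simple path of length `n` in the digraph with arrow relation `A`:
a sequence `p 0, …, p n` of pairwise distinct vertices with an arrow from each
vertex to the next. -/
def IsPathOn {V : Type*} (A : V → V → Prop) (n : ℕ) (p : ℕ → V) : Prop :=
  (∀ i j, i ≤ n → j ≤ n → p i = p j → i = j) ∧ ∀ i, i < n → A (p i) (p (i + 1))

/-- A digraph is acyclic if no directed simple path can be closed up by an arrow
from its last vertex to its first. -/
def DAcyclic {V : Type*} (A : V → V → Prop) : Prop :=
  ¬ ∃ (n : ℕ) (p : ℕ → V), IsPathOn A n p ∧ A (p n) (p 0)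

/-- A (directed) ray: pairwise distinct vertices `r 0, r 1, …` with an arrow from
`r i` to `r (i+1)` for every `i`. -/
def IsRay {V : Type*} (A : V → V → Prop) (r : ℕ → V) : Prop :=
  Function.Injective r ∧ ∀ i : ℕ, A (r i) (r (i + 1))

/-- A digraph is rayless if it contains no ray. -/
def Rayless {V : Type*} (A : V → V → Prop) : Prop := ¬ ∃ r : ℕ → V, IsRay A r

/-- Two rays are equivalent if they coincide from some point on. -/
def RayEquiv {V : Type*} (r s : ℕ → V) : Prop :=
  ∃ M N : ℕ, ∀ i : ℕ, r (M + i) = s (N + i)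

/-- The ray `r` has a bypass starting at `r n`: a directed simple path, not
contained in `r`, from `r n` to `r (n + k)` for some `k > 0`. -/
def HasBypassAt {V : Type*} (A : V → V → Prop) (r : ℕ → V) (n : ℕ) : Prop :=
  ∃ k : ℕ, 0 < k ∧ ∃ (m : ℕ) (p : ℕ → V), IsPathOn A m p ∧ p 0 = r n ∧
    p m = r (n + k) ∧ ∃ i ≤ m, ∀ j : ℕ, p i ≠ r j

/-- A multiray: a ray having bypasses starting arbitrarily far along it. -/
def IsMultiray {V : Type*} (A : V → V → Prop) (r : ℕ → V) : Prop :=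
  IsRay A r ∧ ∀ N : ℕ, ∃ i : ℕ, HasBypassAt A r (N + i)

/-- The family of equivalence classes of rays of the digraph `A`. -/
def RayClasses {V : Type*} (A : V → V → Prop) : Set (Set (ℕ → V)) :=
  {C | ∃ r : ℕ → V, IsRay A r ∧ C = {s | IsRay A s ∧ RayEquiv r s}}

section Poset

variable {P : Type*} [PartialOrder P]

/-- A chain contained in the principal ideal `x↓`. -/
def IsChainIn (x : P) (C : Set P) : Prop := C ⊆ Set.Iic x ∧ IsChain (· ≤ ·) C

/-- A maximal chain in the principal ideal `x↓`. -/
def IsMaxChainIn (x : P) (C : Set P) : Prop :=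
  IsChainIn x C ∧ ∀ D : Set P, IsChainIn x D → C ⊆ D → C = D

/-- `P` is graded with degree function `deg`: for every `x`, every maximal chain
in `x↓` is finite of length `deg x` (i.e. cardinality `deg x + 1`). -/
def GradedDeg (deg : P → ℕ) : Prop :=
  ∀ x : P, ∀ C : Set P, IsMaxChainIn x C → C.Finite ∧ C.ncard = deg x + 1

/-- A matching on the Hasse diagram of `P`: a set of arrows `(x, y)` (where `x`
covers `y`) no two of which share a vertex. -/
def IsMatching (M : Set (P × P)) : Prop :=
  (∀ e ∈ M, e.2 ⋖ e.1) ∧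
  ∀ e ∈ M, ∀ f ∈ M, e ≠ f → e.1 ≠ f.1 ∧ e.1 ≠ f.2 ∧ e.2 ≠ f.1 ∧ e.2 ≠ f.2

/-- The arrow relation of the digraph `H_M(P)`, obtained from the Hasse diagram
of `P` by reversing the arrows belonging to `M`. -/
def HasseM (M : Set (P × P)) (x y : P) : Prop :=
  (y ⋖ x ∧ (x, y) ∉ M) ∨ (y, x) ∈ M

/-- A Morse matching: a matching `M` on the Hasse diagram such that `H_M(P)` is
acyclic. -/
def IsMorse (M : Set (P × P)) : Prop := IsMatching M ∧ DAcyclic (HasseM M)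

/-- An element is critical for `M` if it is matched with no other element. -/
def Critical (M : Set (P × P)) (x : P) : Prop := ∀ e ∈ M, e.1 ≠ x ∧ e.2 ≠ x

/-- The set of critical elements of the matching `M`. -/
def Crit (M : Set (P × P)) : Set P := {x | Critical M x}

/-- The degree of a ray `r`: the minimal degree of an element appearing on `r`. -/
noncomputable def rayDeg (deg : P → ℕ) (r : ℕ → P) : ℕ := sInf {i | ∃ j : ℕ, deg (r j) = i}

/-- `M₊(x)`: if `x` is matched with an element `z` of degree `deg x + 1`, the set
of elements `y ≠ x` covered by `z`; otherwise empty. -/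
def Mplus (M : Set (P × P)) (deg : P → ℕ) (x : P) : Set P :=
  {y | ∃ z : P, (z, x) ∈ M ∧ deg z = deg x + 1 ∧ y ≠ x ∧ y ⋖ z}

/-- The stages `Dₖ(x)` of the construction of `D_M(x)`. -/
def Dk (M : Set (P × P)) (deg : P → ℕ) (x : P) : ℕ → Set P
  | 0 => {x}
  | (k + 1) => Dk M deg x k ∪ ⋃ y ∈ Dk M deg x k, Mplus M deg y

/-- The vertex set of the digraph `D_M(x)`. -/
def Dset (M : Set (P × P)) (deg : P → ℕ) (x : P) : Set P := ⋃ k : ℕ, Dk M deg x k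

/-- The arrow relation of the digraph `D_M(x)`: an arrow from `y` to each element
of `M₊(y)`. -/
def DArrow (M : Set (P × P)) (deg : P → ℕ) (x : P) (y z : P) : Prop :=
  y ∈ Dset M deg x ∧ z ∈ Mplus M deg y

/-- `L_M(x)`: the length of the longest directed simple path in `D_M(x)`. -/
noncomputable def LM (M : Set (P × P)) (deg : P → ℕ) (x : P) : ℕ :=
  sSup {n | ∃ p : ℕ → P, IsPathOn (DArrow M deg x) n p ∧ ∀ i ≤ n, p i ∈ Dset M deg x}

end Poset

section Graded

variable {P : Type*} [PartialOrder P]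

theorem exists_isMaxChainIn_mem (y : P) : ∃ C : Set P, IsMaxChainIn y C ∧ y ∈ C := by
  have hunion : ∀ c ⊆ {C : Set P | IsChainIn y C}, IsChain (· ⊆ ·) c →
      IsChainIn y (⋃₀ c) := by
    intro c hcS hc
    refine ⟨Set.sUnion_subset fun C hC => (hcS hC).1, ?_⟩
    rintro a ⟨A, hA, ha⟩ b ⟨B, hB, hb⟩ hab
    rcases hc.total hA hB with hAB | hBA
    · exact (hcS hB).2 (hAB ha) hb hab
    · exact (hcS hA).2 ha (hBA hb) hab
  obtain ⟨C, hyC, hC⟩ := zorn_subset_nonempty {C : Set P | IsChainIn y C}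
    (fun c hcS hc _ => ⟨⋃₀ c, hunion c hcS hc, fun _ => Set.subset_sUnion_of_mem⟩) {y}
    ⟨Set.singleton_subset_iff.2 le_rfl, IsChain.singleton⟩
  exact ⟨C, ⟨hC.prop, fun D hD hCD => hC.eq_of_subset hD hCD⟩, hyC rfl⟩

theorem IsMaxChainIn.insert_of_covBy {x y : P} {C : Set P} (hC : IsMaxChainIn y C)
    (hyC : y ∈ C) (hyx : y ⋖ x) : IsMaxChainIn x (insert x C) := by
  have hCx : ∀ c ∈ C, c ≤ x := fun c hc => (hC.1.1 hc).trans hyx.le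
  refine ⟨⟨Set.insert_subset le_rfl hCx, hC.1.2.insert fun c hc _ => Or.inr (hCx c hc)⟩, ?_⟩
  intro D hD hCD
  refine hCD.antisymm fun d hd => ?_
  rcases eq_or_ne d x with rfl | hdx
  · exact Set.mem_insert _ _
  have hbelow : ∀ e ∈ D, e ≠ x → e ≤ y := by
    intro e he hex
    rcases eq_or_ne e y with rfl | hey
    · exact le_rfl
    refine (hD.2 he (hCD (Set.mem_insert_of_mem _ hyC)) hey).resolve_right fun hye => ?_
    exact hyx.2 (hye.lt_of_ne' hey) ((hD.1 he).lt_of_ne hex)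
  have hD' : IsChainIn y (D \ {x}) := ⟨fun e he => hbelow e he.1 he.2, hD.2.mono Set.sdiff_subset⟩
  have hCD' : C ⊆ D \ {x} := fun c hc =>
    ⟨hCD (Set.mem_insert_of_mem _ hc), fun hcx => hyx.lt.not_ge (hcx ▸ hC.1.1 hc)⟩
  rw [hC.2 _ hD' hCD']
  exact Set.mem_insert_of_mem _ ⟨hd, hdx⟩

theorem GradedDeg.deg_eq_of_covBy {deg : P → ℕ} (hgraded : GradedDeg deg) {x y : P}
    (hyx : y ⋖ x) : deg x = deg y + 1 := by
  obtain ⟨C, hC, hyC⟩ := exists_isMaxChainIn_mem y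
  obtain ⟨hCfin, hCcard⟩ := hgraded y C hC
  have hxC : x ∉ C := fun hx => hyx.lt.not_ge (hC.1.1 hx)
  have := (hgraded x _ (hC.insert_of_covBy hyC hyx)).2
  rw [Set.ncard_insert_of_notMem hxC hCfin, hCcard] at this
  omega

end Graded

namespace IsMatching

variable {P : Type*} [PartialOrder P] {M : Set (P × P)}

theorem notMem_of_mem (hM : IsMatching M) {x y z : P} (hyx : (y, x) ∈ M) :
    (z, y) ∉ M := by
  intro hzy
  by_cases h : ((y, x) : P × P) = (z, y)
  · exact (hM.1 _ hyx).lt.ne (Prod.ext_iff.1 h).2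
  · exact (hM.2 _ hyx _ hzy h).2.1 rfl

theorem deg_of_hasseM (hM : IsMatching M) {deg : P → ℕ} (hgraded : GradedDeg deg) {x y : P}
    (h : HasseM M x y) : deg y + 1 = deg x ∨ ((y, x) ∈ M ∧ deg y = deg x + 1) := by
  rcases h with ⟨hyx, -⟩ | hyx
  · exact Or.inl (hgraded.deg_eq_of_covBy hyx).symm
  · exact Or.inr ⟨hyx, hgraded.deg_eq_of_covBy (hM.1 _ hyx)⟩

theorem exists_lt_deg_le (hM : IsMatching M) {deg : P → ℕ} (hgraded : GradedDeg deg)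
    {r : ℕ → P} (hr : ∀ i, HasseM M (r i) (r (i + 1))) (j : ℕ) :
    ∃ k, j < k ∧ deg (r k) ≤ deg (r j) := by
  rcases hM.deg_of_hasseM hgraded (hr j) with hdown | ⟨hup, hdeg⟩
  · exact ⟨j + 1, by omega, by omega⟩
  rcases hM.deg_of_hasseM hgraded (hr (j + 1)) with hdown' | ⟨hup', -⟩
  · exact ⟨j + 1 + 1, by omega, by omega⟩
  · exact absurd hup' (hM.notMem_of_mem hup)

end IsMatching

theorem exists_ge_le_of_forall_exists_lt_le {α : Type*} [Preorder α] {f : ℕ → α}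
    (hf : ∀ j, ∃ k, j < k ∧ f k ≤ f j) (j N : ℕ) : ∃ k, N ≤ k ∧ f k ≤ f j := by
  induction N with
  | zero => exact ⟨j, Nat.zero_le _, le_rfl⟩
  | succ N ih =>
    obtain ⟨k, hNk, hk⟩ := ih
    obtain ⟨k', hkk', hk'⟩ := hf k
    exact ⟨k', by omega, hk'.trans hk⟩

theorem iInf_add_eq_of_forall_exists_lt_le {α : Type*} [ConditionallyCompleteLinearOrderBot α]
    [WellFoundedLT α] {f : ℕ → α} (hf : ∀ j, ∃ k, j < k ∧ f k ≤ f j) (N : ℕ) :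
    ⨅ i, f (N + i) = ⨅ i, f i := by
  refine le_antisymm ?_ (le_ciInf fun i => ciInf_le' f (N + i))
  obtain ⟨j, hj⟩ := ciInf_mem f
  obtain ⟨k, hNk, hk⟩ := exists_ge_le_of_forall_exists_lt_le hf j N
  refine ciInf_le_of_le' (k - N) ?_
  rw [Nat.add_sub_cancel' hNk, ← hj]
  exact hk

/-- equivalent rays of a Morse matching have the same degree. -/
theorem stmt11 {P : Type*} [PartialOrder P] (deg : P → ℕ) (hgraded : GradedDeg deg)
    (M : Set (P × P)) (hM : IsMorse M) (r s : ℕ → P)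
    (hr : IsRay (HasseM M) r) (hs : IsRay (HasseM M) s) (heq : RayEquiv r s) :
    sInf {i : ℕ | ∃ j : ℕ, deg (r j) = i} = sInf {i : ℕ | ∃ j : ℕ, deg (s j) = i} := by
  obtain ⟨m, n, hmn⟩ := heq
  change ⨅ j, deg (r j) = ⨅ j, deg (s j)
  calc ⨅ j, deg (r j)
      = ⨅ i, deg (r (m + i)) := (iInf_add_eq_of_forall_exists_lt_le
          (hM.1.exists_lt_deg_le hgraded hr.2) m).symm
    _ = ⨅ i, deg (s (n + i)) := by simp only [hmn]
    _ = ⨅ j, deg (s j) := iInf_add_eq_of_forall_exists_lt_le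
          (hM.1.exists_lt_deg_le hgraded hs.2) n
end

section
/- Let P be a graded poset with finite principal ideals equipped with a rayless Morse matching M, let i ∈ ℕ, and let the sets P^i, P^{i+1}_*, Lₙ, L̄ₙ and P^i_n be as defined in the context. Then for every n > 0 and every x ∈ Lₙ, the set of elements of P^i_n strictly greater than x is exactly {m_x}. -/
/-- The subsets `P^n` of the proof of the main theorem: `P⁰` is the set of
critical 0-cells; `P^{n+1}` is the union of `P^{n+1}_*` (which is `P^n` together
with the noncritical `n`-cells not contained in `P^n` and their
`(n+1)`-dimensional matches) and the set of critical `(n+1)`-cells. -/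
def Pn {P : Type*} [PartialOrder P] (M : Set (P × P)) (deg : P → ℕ) : ℕ → Set P
  | 0 => {x | deg x = 0 ∧ Critical M x}
  | (n + 1) =>
      (Pn M deg n ∪ {x | deg x = n ∧ ¬ Critical M x ∧ x ∉ Pn M deg n} ∪
        {z | deg z = n + 1 ∧
          ∃ x, (deg x = n ∧ ¬ Critical M x ∧ x ∉ Pn M deg n) ∧ (z, x) ∈ M}) ∪
      {c | deg c = n + 1 ∧ Critical M c}

/-- `P^{i+1}_*`: the union of `P^i`, the noncritical `i`-cells not contained in
`P^i`, and their `(i+1)`-dimensional matches. -/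
def PstarSucc {P : Type*} [PartialOrder P] (M : Set (P × P)) (deg : P → ℕ)
    (i : ℕ) : Set P :=
  Pn M deg i ∪ {x | deg x = i ∧ ¬ Critical M x ∧ x ∉ Pn M deg i} ∪
    {z | deg z = i + 1 ∧
      ∃ x, (deg x = i ∧ ¬ Critical M x ∧ x ∉ Pn M deg i) ∧ (z, x) ∈ M}

/-- `Lₙ = {x ∈ P^{i+1}_* : deg x = i and L_M(x) = n}`. -/
def Lset {P : Type*} [PartialOrder P] (M : Set (P × P)) (deg : P → ℕ)
    (i n : ℕ) : Set P :=
  {x | x ∈ PstarSucc M deg i ∧ deg x = i ∧ LM M deg x = n}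

/-- `L̄ₙ = Lₙ ∪ {m_x : x ∈ Lₙ}`, where `m_x` is the `(i+1)`-cell matched with
`x`. -/
def Lbar {P : Type*} [PartialOrder P] (M : Set (P × P)) (deg : P → ℕ)
    (i n : ℕ) : Set P :=
  Lset M deg i n ∪ {z | deg z = i + 1 ∧ ∃ x ∈ Lset M deg i n, (z, x) ∈ M}

/-- `P^i_k = P^i ∪ ⋃_{1 ≤ n ≤ k} L̄ₙ`. -/
def Pik {P : Type*} [PartialOrder P] (M : Set (P × P)) (deg : P → ℕ)
    (i k : ℕ) : Set P :=
  Pn M deg i ∪ ⋃ n ∈ Set.Icc 1 k, Lbar M deg i n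



/-! An element of `P^i_n` above the `i`-cell `x` has degree `i + 1`, so it is `m_{x'}` for some
`x' ∈ L_m` with `m ≤ n`. If `x' ≠ x` then `x ∈ M₊(x')`, and putting `x'` in front of a walk from
`x` to a longest path of `D_M(x)` gives a walk in `D_M(x')` of length more than `n`. Walks along
the arrows `M₊` are automatically simple: an arrow `y → z` lifts to the path `y → m_y → z` of
`H_M(P)`, which is acyclic. Hence `L_M(x') > n ≥ m`, a contradiction. -/

def IsWalkOn {V : Type*} (A : V → V → Prop) (n : ℕ) (w : ℕ → V) : Prop :=
  ∀ i < n, A (w i) (w (i + 1))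

section Walks

open Relation

variable {V : Type*} {A : V → V → Prop} {n : ℕ} {w : ℕ → V}

lemma IsWalkOn.mono {m : ℕ} (hw : IsWalkOn A n w) (hmn : m ≤ n) : IsWalkOn A m w :=
  fun i hi => hw i (by omega)

lemma IsWalkOn.shift {a m : ℕ} (hw : IsWalkOn A n w) (h : a + m ≤ n) :
    IsWalkOn A m (fun t => w (a + t)) :=
  fun t ht => by simpa only [Nat.add_assoc] using hw (a + t) (by omega)

lemma IsWalkOn.cons {x : V} (hx : A x (w 0)) (hw : IsWalkOn A n w) :
    IsWalkOn A (n + 1) (fun | 0 => x | j + 1 => w j) := by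
  rintro (_ | j) hj
  · exact hx
  · exact hw j (by omega)

lemma IsWalkOn.transGen (hw : IsWalkOn A n w) {a b : ℕ} (hab : a < b) (hb : b ≤ n) :
    TransGen A (w a) (w b) := by
  induction b with
  | zero => omega
  | succ b ih =>
    rcases (Nat.lt_succ_iff.mp hab).eq_or_lt with rfl | hab'
    · exact .single (hw a (by omega))
    · exact (ih hab' (by omega)).tail (hw b (by omega))

lemma IsWalkOn.reflTransGen (hw : IsWalkOn A n w) {b : ℕ} (hb : b ≤ n) :
    ReflTransGen A (w 0) (w b) := by
  rcases Nat.eq_zero_or_pos b with rfl | hb0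
  · exact .refl
  · exact (hw.transGen hb0 hb).to_reflTransGen

lemma exists_walkOn_of_reflTransGen {x y : V} (hxy : ReflTransGen A x y)
    (hw0 : w 0 = y) (hw : IsWalkOn A n w) : ∃ w' : ℕ → V, w' 0 = x ∧ IsWalkOn A n w' := by
  induction hxy using ReflTransGen.head_induction_on with
  | refl => exact ⟨w, hw0, hw⟩
  | head hac _ ih =>
    obtain ⟨w', hw'0, hw'⟩ := ih
    exact ⟨_, rfl, (hw'.cons (hw'0 ▸ hac)).mono n.le_succ⟩

lemma exists_walkOn_of_transGen {x y : V} (hxy : TransGen A x y) :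
    ∃ (m : ℕ) (w : ℕ → V), 0 < m ∧ w 0 = x ∧ w m = y ∧ IsWalkOn A m w := by
  induction hxy using TransGen.head_induction_on with
  | single hxy =>
    refine ⟨1, fun | 0 => _ | _ + 1 => y, one_pos, rfl, rfl, ?_⟩
    rintro (_ | _) hi
    · exact hxy
    · omega
  | head hac _ ih =>
    obtain ⟨m, w, -, hw0, hwm, hw⟩ := ih
    exact ⟨m + 1, _, m.succ_pos, rfl, hwm, hw.cons (hw0 ▸ hac)⟩

/-- A closed walk of minimal length is a cycle, because a repeated vertex would cut out a
shorter closed walk. -/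
lemma DAcyclic.walkOn_ne (hA : DAcyclic A) {m : ℕ} (hm : 0 < m) (hw : IsWalkOn A m w) :
    w m ≠ w 0 := by
  induction m using Nat.strong_induction_on generalizing w with
  | _ m ih =>
    intro hclosed
    by_cases hinj : ∀ i j, i ≤ m - 1 → j ≤ m - 1 → w i = w j → i = j
    · refine hA ⟨m - 1, w, ⟨hinj, (hw.mono (m.sub_le 1))⟩, ?_⟩
      simpa only [Nat.sub_add_cancel hm, hclosed] using hw (m - 1) (by omega)
    · have hshorter : ∀ a b, a < b → b ≤ m - 1 → w a ≠ w b := fun a b hab hb hab' =>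
        ih (b - a) (by omega) (by omega) (hw.shift (a := a) (by omega))
          (by simpa only [Nat.add_sub_cancel' hab.le, Nat.add_zero] using hab'.symm)
      push Not at hinj
      obtain ⟨a, b, ha, hb, hab, hne⟩ := hinj
      rcases hne.lt_or_gt with h | h
      · exact hshorter a b h hb hab
      · exact hshorter b a h ha hab.symm

lemma DAcyclic.not_transGen_self (hA : DAcyclic A) (x : V) : ¬ TransGen A x x := fun hx => by
  obtain ⟨m, w, hm, hw0, hwm, hw⟩ := exists_walkOn_of_transGen hx
  exact hA.walkOn_ne hm hw (hwm.trans hw0.symm)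

lemma IsWalkOn.isPathOn (hA : ∀ x, ¬ TransGen A x x) (hw : IsWalkOn A n w) :
    IsPathOn A n w := by
  refine ⟨fun a b ha hb hab => ?_, hw⟩
  by_contra hne
  rcases Nat.lt_or_gt_of_ne hne with h | h
  · exact hA _ (hab ▸ hw.transGen h hb)
  · exact hA _ (hab ▸ hw.transGen h ha)

end Walks

section Graded

variable {P : Type*} [PartialOrder P]

lemma exists_isMaxChainIn_superset {y : P} (hfin : (Set.Iic y).Finite) {C : Set P}
    (hC : IsChainIn y C) : ∃ D : Set P, IsMaxChainIn y D ∧ C ⊆ D := by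
  have hchains : {D : Set P | IsChainIn y D ∧ C ⊆ D}.Finite :=
    hfin.finite_subsets.subset fun D hD => hD.1.1
  obtain ⟨D, hD, hmax⟩ := hchains.exists_maximalFor id _ ⟨C, hC, subset_rfl⟩
  exact ⟨D, ⟨hD.1, fun E hE hDE => hDE.antisymm (hmax ⟨hE, hD.2.trans hDE⟩ hDE)⟩, hD.2⟩

/-- Extending a maximal chain of `x↓` by `y` gives a longer chain of `y↓`. -/
lemma GradedDeg.strictMono {deg : P → ℕ} (hgraded : GradedDeg deg)
    (hfin : ∀ x : P, (Set.Iic x).Finite) : StrictMono deg := by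
  intro x y hxy
  obtain ⟨C, hC, -⟩ := exists_isMaxChainIn_superset (hfin x) (C := ∅) ⟨Set.empty_subset _, .empty⟩
  have hCy : IsChainIn y (insert y C) :=
    ⟨Set.insert_subset Set.self_mem_Iic (hC.1.1.trans (Set.Iic_subset_Iic.mpr hxy.le)),
      hC.1.2.insert fun b hb _ => Or.inr ((hC.1.1 hb).trans hxy.le)⟩
  obtain ⟨D, hD, hCD⟩ := exists_isMaxChainIn_superset (hfin y) hCy
  have hyC : y ∉ C := fun h => hxy.not_ge (hC.1.1 h)
  obtain ⟨hCfin, hCcard⟩ := hgraded x C hC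
  obtain ⟨hDfin, hDcard⟩ := hgraded y D hD
  have hle := Set.ncard_le_ncard hCD hDfin
  rw [Set.ncard_insert_of_notMem hyC hCfin] at hle
  omega

lemma covBy_of_lt_of_eq_succ {f : P → ℕ} (hf : StrictMono f) {x y : P} (hxy : x < y)
    (hfy : f y = f x + 1) : x ⋖ y :=
  ⟨hxy, fun c hxc hcy => by have := hf hxc; have := hf hcy; omega⟩

end Graded

section Matching

open Relation

variable {P : Type*} [PartialOrder P] {M : Set (P × P)} {deg : P → ℕ}

lemma IsMatching.fst_eq (hM : IsMatching M) {z z' x : P} (hz : (z, x) ∈ M)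
    (hz' : (z', x) ∈ M) : z = z' := by
  by_contra hne
  exact (hM.2 _ hz _ hz' (by simp [hne])).2.2.2 rfl

/-- The arrows of `D_M(x)`, forgetting the restriction to the vertices of `D_M(x)`. -/
def MplusRel (M : Set (P × P)) (deg : P → ℕ) (y z : P) : Prop := z ∈ Mplus M deg y

lemma mem_Dset_iff_reflTransGen {x y : P} :
    y ∈ Dset M deg x ↔ ReflTransGen (MplusRel M deg) x y := by
  constructor
  · rintro ⟨_, ⟨k, rfl⟩, hk⟩
    induction k generalizing y with
    | zero => exact hk ▸ .refl
    | succ k ih =>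
      rcases hk with hk | hk
      · exact ih hk
      · obtain ⟨u, ⟨u, rfl⟩, _, ⟨hu, rfl⟩, hyu⟩ := hk
        exact (ih hu).tail hyu
  · intro hxy
    induction hxy with
    | refl => exact Set.mem_iUnion.mpr ⟨0, rfl⟩
    | tail _ hyz ih =>
      obtain ⟨k, hk⟩ := Set.mem_iUnion.mp ih
      exact Set.mem_iUnion.mpr ⟨k + 1, Or.inr (Set.mem_biUnion hk hyz)⟩

lemma MplusRel.transGen_hasseM (hM : IsMatching M) {y z : P} (hyz : MplusRel M deg y z) :
    TransGen (HasseM M) y z := by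
  obtain ⟨c, hcy, -, hzy, hzc⟩ := hyz
  refine .tail (.single (Or.inr hcy)) (Or.inl ⟨hzc, fun hcz => ?_⟩)
  exact (hM.2 _ hcy _ hcz (by simp [hzy.symm])).1 rfl

lemma IsMorse.not_transGen_mplusRel_self (hM : IsMorse M) (y : P) :
    ¬ TransGen (MplusRel M deg) y y := fun hy =>
  hM.2.not_transGen_self y (TransGen.closed (fun _ _ => MplusRel.transGen_hasseM hM.1) _ _ hy)

end Matching

section LongestPath

open Relation

variable {P : Type*} [PartialOrder P] {M : Set (P × P)} {deg : P → ℕ} {x : P}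

-- `LM` is the junk value `0` when path lengths are unbounded, hence the positivity hypotheses.
lemma Nat.bddAbove_of_sSup_pos {S : Set ℕ} (h : 0 < sSup S) : BddAbove S := by
  by_contra hS
  rw [csSup_of_not_bddAbove hS, csSup_empty] at h
  exact h.ne rfl

lemma exists_isPathOn_LM (hx : 0 < LM M deg x) :
    ∃ p : ℕ → P, IsPathOn (DArrow M deg x) (LM M deg x) p ∧
      ∀ i ≤ LM M deg x, p i ∈ Dset M deg x := by
  refine Nat.sSup_mem ?_ (Nat.bddAbove_of_sSup_pos hx)
  by_contra hS
  unfold LM at hx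
  rw [Set.not_nonempty_iff_eq_empty.mp hS] at hx
  exact hx.ne csSup_empty.symm

lemma exists_walkOn_LM (hx : 0 < LM M deg x) :
    ∃ w : ℕ → P, w 0 = x ∧ IsWalkOn (MplusRel M deg) (LM M deg x) w := by
  obtain ⟨p, hp, hpD⟩ := exists_isPathOn_LM hx
  exact exists_walkOn_of_reflTransGen (mem_Dset_iff_reflTransGen.mp (hpD 0 (Nat.zero_le _))) rfl
    fun i hi => (hp.2 i hi).2

lemma le_LM_of_walkOn (hM : IsMorse M) (hx : 0 < LM M deg x) {n : ℕ} {w : ℕ → P}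
    (hw0 : w 0 = x) (hw : IsWalkOn (MplusRel M deg) n w) : n ≤ LM M deg x := by
  have hwD : ∀ i ≤ n, w i ∈ Dset M deg x := fun i hi =>
    mem_Dset_iff_reflTransGen.mpr (hw0 ▸ hw.reflTransGen hi)
  have hpath := hw.isPathOn hM.not_transGen_mplusRel_self
  exact le_csSup (Nat.bddAbove_of_sSup_pos hx)
    ⟨w, ⟨hpath.1, fun i hi => ⟨hwD i hi.le, hw i hi⟩⟩, hwD⟩

lemma exists_match_of_LM_pos (hx : 0 < LM M deg x) :
    ∃ z : P, (z, x) ∈ M ∧ deg z = deg x + 1 := by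
  obtain ⟨w, hw0, hw⟩ := exists_walkOn_LM hx
  obtain ⟨z, hzx, hdeg, -⟩ := hw 0 hx
  exact ⟨z, hw0 ▸ hzx, hw0 ▸ hdeg⟩

lemma LM_lt_of_mem_Mplus (hM : IsMorse M) {x' : P} (hx : 0 < LM M deg x)
    (hx' : 0 < LM M deg x') (hxx' : x ∈ Mplus M deg x') : LM M deg x < LM M deg x' := by
  obtain ⟨w, hw0, hw⟩ := exists_walkOn_LM hx
  exact le_LM_of_walkOn hM hx' rfl (hw.cons (hw0 ▸ hxx'))

end LongestPath

section Filtration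

variable {P : Type*} [PartialOrder P] {M : Set (P × P)} {deg : P → ℕ}

lemma deg_le_of_mem_Pn {k : ℕ} {x : P} (hx : x ∈ Pn M deg k) : deg x ≤ k := by
  induction k with
  | zero => exact hx.1.le
  | succ k ih =>
    rcases hx with ((hx | hx) | hx) | hx
    · exact (ih hx).trans k.le_succ
    · exact hx.1.le.trans k.le_succ
    · exact hx.1.le
    · exact hx.1.le

lemma mem_Pik_of_mem_Lset {i n : ℕ} {x z : P} (hn : 0 < n) (hx : x ∈ Lset M deg i n)
    (hzx : (z, x) ∈ M) (hz : deg z = i + 1) : z ∈ Pik M deg i n :=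
  Or.inr (Set.mem_iUnion₂.mpr ⟨n, ⟨hn, le_rfl⟩, Or.inr ⟨hz, x, hx, hzx⟩⟩)

lemma exists_Lset_of_mem_Pik {i n : ℕ} {x y : P} (hdeg : StrictMono deg)
    (hy : y ∈ Pik M deg i n) (hx : deg x = i) (hxy : x < y) :
    deg y = i + 1 ∧ ∃ m ∈ Set.Icc 1 n, ∃ x' ∈ Lset M deg i m, (y, x') ∈ M := by
  have hxy' := hdeg hxy
  rcases hy with hy | hy
  · exact absurd (deg_le_of_mem_Pn hy) (by omega)
  obtain ⟨m, hm, hy | ⟨hdegy, hyx'⟩⟩ := Set.mem_iUnion₂.mp hy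
  · exact absurd hy.2.1 (by omega)
  · exact ⟨hdegy, m, hm, hyx'⟩

end Filtration

theorem stmt15_general {P : Type*} [PartialOrder P] (deg : P → ℕ)
    (hgraded : GradedDeg deg) (hfin : ∀ x : P, (Set.Iic x).Finite)
    (M : Set (P × P)) (hM : IsMorse M) (i : ℕ) :
    ∀ n : ℕ, 0 < n → ∀ x ∈ Lset M deg i n,
      ∃ z : P, (z, x) ∈ M ∧ deg z = i + 1 ∧
        {y | y ∈ Pik M deg i n ∧ x < y} = {z} := by
  intro n hn x hxL
  obtain ⟨-, hdegx, hLx⟩ := id hxL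
  have hpos : 0 < LM M deg x := hLx ▸ hn
  obtain ⟨z, hzx, hdegz⟩ := exists_match_of_LM_pos hpos
  refine ⟨z, hzx, by omega, Set.eq_singleton_iff_unique_mem.mpr
    ⟨⟨mem_Pik_of_mem_Lset hn hxL hzx (by omega), (hM.1.1 _ hzx).lt⟩, ?_⟩⟩
  rintro y ⟨hy, hxy⟩
  have hmono := hgraded.strictMono hfin
  obtain ⟨hdegy, m, ⟨hm, hmn⟩, x', ⟨-, hdegx', hLx'⟩, hyx'⟩ :=
    exists_Lset_of_mem_Pik hmono hy hdegx hxy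
  by_cases hxx' : x' = x
  · exact hM.1.fst_eq (hxx' ▸ hyx') hzx
  · -- otherwise `x ∈ M₊(x')`, so `x'` would have a longer path than `x`
    have hxMx' : x ∈ Mplus M deg x' :=
      ⟨y, hyx', by omega, Ne.symm hxx', covBy_of_lt_of_eq_succ hmono hxy (by omega)⟩
    have := LM_lt_of_mem_Mplus hM hpos (by omega) hxMx'
    omega

/-- for every `n > 0` and every `x ∈ Lₙ`, the set of elements of
`P^i_n` strictly greater than `x` is exactly `{m_x}`, where `m_x` is the unique
`(i+1)`-cell matched with `x`. -/
theorem stmt15 {P : Type*} [PartialOrder P] (deg : P → ℕ)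
    (hgraded : GradedDeg deg) (hfin : ∀ x : P, (Set.Iic x).Finite)
    (M : Set (P × P)) (hM : IsMorse M) (hrayless : Rayless (HasseM M)) (i : ℕ) :
    ∀ n : ℕ, 0 < n → ∀ x ∈ Lset M deg i n,
      ∃ z : P, (z, x) ∈ M ∧ deg z = i + 1 ∧
        {y | y ∈ Pik M deg i n ∧ x < y} = {z} :=
  stmt15_general deg hgraded hfin M hM i
end
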